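/- arXiv:2605.12117 — 6 statements merged into one kernel-verified Lean document; each statement's English description precedes it below -/
import Mathlib

section
/- Let X₁,…,Xₙ and Y be Banach spaces and let C ⊆ L(X₁,…,Xₙ;Y) be a norm-closed convex set of continuous n-linear operators. If C is not sequentially closed under pointwise convergence, i.e. there exist a sequence (A_k)_k ⊆ C and an operator A ∈ L(X₁,…,Xₙ;Y) with A ∉ C such that ‖A_k(x₁,…,xₙ) − A(x₁,…,xₙ)‖ → 0 for all x₁ ∈ X₁, …, xₙ ∈ Xₙ, then there exists a continuous n-linear operator S : X₁ × ⋯ × Xₙ → Y that does not attain its norm. -/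
open Filter Topology

variable {𝕜 : Type*} [RCLike 𝕜] {n : ℕ} {X : Fin n → Type*}
  [∀ i, NormedAddCommGroup (X i)] [∀ i, NormedSpace 𝕜 (X i)]
  {Y : Type*} [NormedAddCommGroup Y] [NormedSpace 𝕜 Y]

/-- A continuous multilinear operator attains its norm on the product of closed unit balls. -/
def MLNormAttaining (A : ContinuousMultilinearMap 𝕜 X Y) : Prop :=
  ∃ x : ∀ i, X i, (∀ i, ‖x i‖ ≤ 1) ∧ ‖A x‖ = ‖A‖

/-!
Put `Bₖ = Aₖ - A₀`. By Banach–Steinhaus the `Bₖ` are bounded, `Bₖ → 0` pointwise, and since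
`A₀` lies outside the closed convex set `C ∋ Aₖ`, every convex combination of the `Bₖ` has norm
at least some `d > 0`. A James-type construction then yields `S = ∑ 2^-(m+1) • w m`, where
`w m` is chosen greedily in the convex hull `T m` of `{Bₖ | k ≥ m}` so that
`‖P m + 2^-m • w m‖` is nearly minimal (`P m` the partial sums of `S`). If `S` attained its norm
at `x`, then `f = Re (y* (· x))` would norm `S`; near-minimality keeps `f` above `d / 2` on the
tails `R m = ∑ 2^-(i+1) • w (i + m) ∈ closure (T m)`, whereas `f Bₖ ≤ ‖Bₖ x‖ → 0` makes `f` small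
on `T m` for large `m`.
-/

open Set Finset

theorem Set.Nonempty.exists_forall_le_add {α : Type*} {s : Set α} (hs : s.Nonempty) {φ : α → ℝ}
    (hφ : BddBelow (φ '' s)) {ε : ℝ} (hε : 0 < ε) : ∃ x ∈ s, ∀ y ∈ s, φ x ≤ φ y + ε := by
  obtain ⟨_, ⟨x, hx, rfl⟩, hlt⟩ := Real.lt_sInf_add_pos (hs.image φ) hε
  exact ⟨x, hx, fun y hy =>
    (hlt.trans_le (by gcongr; exact csInf_le hφ (mem_image_of_mem φ hy))).le⟩

section Dyadic

variable {E : Type*} [NormedAddCommGroup E] [NormedSpace ℝ E]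

theorem Convex.mem_closure_of_hasSum {ι : Type*} {K : Set E} (hK : Convex ℝ K) {c : ι → ℝ}
    {v : ι → E} {x : E} (hc : ∀ i, 0 ≤ c i) (hc1 : HasSum c 1) (hv : ∀ i, v i ∈ K)
    (hx : HasSum (fun i => c i • v i) x) : x ∈ closure K := by
  have hlim : Tendsto (fun s : Finset ι => (∑ i ∈ s, c i)⁻¹ • ∑ i ∈ s, c i • v i) atTop
      (𝓝 x) := by
    simpa using (Tendsto.inv₀ hc1 one_ne_zero).smul hx
  refine mem_closure_of_tendsto hlim ?_
  filter_upwards [Tendsto.eventually hc1 (lt_mem_nhds zero_lt_one)] with s hs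
  exact hK.centerMass_mem (fun i _ => hc i) hs (fun i _ => hv i)

noncomputable def dyadicSum (w : ℕ → E) : E := ∑' i, (2⁻¹ : ℝ) ^ (i + 1) • w i

theorem hasSum_inv_two_pow_succ : HasSum (fun i : ℕ => (2⁻¹ : ℝ) ^ (i + 1)) 1 := by
  convert hasSum_geometric_two' 1 using 2 with i
  rw [pow_succ, inv_pow]
  ring

variable [CompleteSpace E] {w : ℕ → E} {M : ℝ}

theorem summable_inv_two_pow_succ_smul (hw : ∀ i, ‖w i‖ ≤ M) :
    Summable fun i => (2⁻¹ : ℝ) ^ (i + 1) • w i := by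
  refine (hasSum_inv_two_pow_succ.summable.mul_right M).of_norm_bounded fun i => ?_
  rw [norm_smul, Real.norm_of_nonneg (by positivity)]
  exact mul_le_mul_of_nonneg_left (hw i) (by positivity)

theorem dyadicSum_eq_sum_add (hw : ∀ i, ‖w i‖ ≤ M) (m : ℕ) :
    dyadicSum w = ∑ i ∈ range m, (2⁻¹ : ℝ) ^ (i + 1) • w i +
      (2⁻¹ : ℝ) ^ m • dyadicSum (fun i => w (i + m)) := by
  rw [dyadicSum, ← (summable_inv_two_pow_succ_smul hw).sum_add_tsum_nat_add m, dyadicSum,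
    ← tsum_const_smul'']
  congr 2 with i
  rw [smul_smul, ← pow_add]
  ring_nf

theorem dyadicSum_eq_add_succ (hw : ∀ i, ‖w i‖ ≤ M) :
    dyadicSum w = (2⁻¹ : ℝ) • w 0 + (2⁻¹ : ℝ) • dyadicSum (fun i => w (i + 1)) := by
  simpa using dyadicSum_eq_sum_add hw 1

theorem dyadicSum_mem_closure {K : Set E} (hK : Convex ℝ K) (hwK : ∀ i, w i ∈ K)
    (hw : ∀ i, ‖w i‖ ≤ M) : dyadicSum w ∈ closure K :=
  hK.mem_closure_of_hasSum (fun i => by positivity) hasSum_inv_two_pow_succ hwK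
    (summable_inv_two_pow_succ_smul hw).hasSum

end Dyadic

section James

variable {E : Type*} [NormedAddCommGroup E] [NormedSpace ℝ E]

theorem exists_seq_norm_sum_add_le (T : ℕ → Set E) (hT : ∀ m, (T m).Nonempty) {ε : ℕ → ℝ}
    (hε : ∀ m, 0 < ε m) : ∃ w : ℕ → E, ∀ m, w m ∈ T m ∧ ∀ g ∈ T m,
      ‖∑ i ∈ range m, (2⁻¹ : ℝ) ^ (i + 1) • w i + (2⁻¹ : ℝ) ^ m • w m‖ ≤
        ‖∑ i ∈ range m, (2⁻¹ : ℝ) ^ (i + 1) • w i + (2⁻¹ : ℝ) ^ m • g‖ + (2⁻¹ : ℝ) ^ m * ε m := by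
  have hpick : ∀ m (p : E), ∃ v ∈ T m, ∀ g ∈ T m,
      ‖p + (2⁻¹ : ℝ) ^ m • v‖ ≤ ‖p + (2⁻¹ : ℝ) ^ m • g‖ + (2⁻¹ : ℝ) ^ m * ε m := fun m p =>
    (hT m).exists_forall_le_add ⟨0, by rintro _ ⟨g, -, rfl⟩; exact norm_nonneg _⟩
      (mul_pos (by positivity) (hε m))
  choose pick hpickT hpick using hpick
  let P : ℕ → E := fun m => Nat.rec 0 (fun k p => p + (2⁻¹ : ℝ) ^ (k + 1) • pick k p) m
  have hP : ∀ m, P m = ∑ i ∈ range m, (2⁻¹ : ℝ) ^ (i + 1) • pick i (P i) := by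
    intro m
    induction m with
    | zero => rfl
    | succ m ih => rw [sum_range_succ, ← ih]
  refine ⟨fun m => pick m (P m), fun m => ⟨hpickT m (P m), ?_⟩⟩
  rw [← hP m]
  exact hpick m (P m)

variable [CompleteSpace E]

theorem exists_seq_norm_sum_add_le_dyadicSum {T : ℕ → Set E} (hTc : ∀ m, Convex ℝ (T m))
    (hT : Antitone T) (hne : ∀ m, (T m).Nonempty) {M : ℝ}
    (hM : ∀ m, T m ⊆ Metric.closedBall 0 M) {ε : ℕ → ℝ} (hε : ∀ m, 0 < ε m) :
    ∃ w : ℕ → E, (∀ m, w m ∈ T m) ∧ ∀ m,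
      ‖∑ i ∈ range m, (2⁻¹ : ℝ) ^ (i + 1) • w i + (2⁻¹ : ℝ) ^ m • w m‖ ≤
        ‖dyadicSum w‖ + (2⁻¹ : ℝ) ^ m * ε m := by
  obtain ⟨w, hw⟩ := exists_seq_norm_sum_add_le T hne hε
  have hwM : ∀ m, ‖w m‖ ≤ M := fun m => mem_closedBall_zero_iff.1 (hM m (hw m).1)
  refine ⟨w, fun m => (hw m).1, fun m => ?_⟩
  set P := ∑ i ∈ range m, (2⁻¹ : ℝ) ^ (i + 1) • w i
  have htail : dyadicSum (fun i => w (i + m)) ∈ closure (T m) :=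
    dyadicSum_mem_closure (hTc m) (fun i => hT (Nat.le_add_left m i) (hw _).1) (fun i => hwM _)
  -- the near-minimality of `w m` over `T m` passes to the closure of `T m`, where the tail lies
  have hle := closure_minimal (t := {g | ‖P + (2⁻¹ : ℝ) ^ m • w m‖ - (2⁻¹ : ℝ) ^ m * ε m ≤
      ‖P + (2⁻¹ : ℝ) ^ m • g‖}) (fun g hg => sub_le_iff_le_add.2 ((hw m).2 g hg))
    (isClosed_le continuous_const (by fun_prop)) htail
  rw [dyadicSum_eq_sum_add hwM m]
  exact sub_le_iff_le_add.1 hle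

theorem apply_dyadicSum_tail_sub_le {w : ℕ → E} {M : ℝ} (hw : ∀ m, ‖w m‖ ≤ M) {ε : ℕ → ℝ}
    (hnear : ∀ m, ‖∑ i ∈ range m, (2⁻¹ : ℝ) ^ (i + 1) • w i + (2⁻¹ : ℝ) ^ m • w m‖ ≤
      ‖dyadicSum w‖ + (2⁻¹ : ℝ) ^ m * ε m)
    {f : E →L[ℝ] ℝ} (hf : ∀ v, f v ≤ ‖v‖) (hfS : ‖dyadicSum w‖ ≤ f (dyadicSum w)) (m : ℕ) :
    f (dyadicSum fun i => w (i + m)) - ε m ≤ f (dyadicSum fun i => w (i + (m + 1))) := by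
  have hsplit : f (dyadicSum w) = f (∑ i ∈ range m, (2⁻¹ : ℝ) ^ (i + 1) • w i) +
      (2⁻¹ : ℝ) ^ m * f (dyadicSum fun i => w (i + m)) := by
    rw [dyadicSum_eq_sum_add hw m, map_add, map_smul, smul_eq_mul]
  have hrec : f (dyadicSum fun i => w (i + m)) =
      2⁻¹ * f (w m) + 2⁻¹ * f (dyadicSum fun i => w (i + (m + 1))) := by
    rw [dyadicSum_eq_add_succ (fun i => hw (i + m)), map_add, map_smul, map_smul, smul_eq_mul,
      smul_eq_mul, zero_add]
    simp only [add_right_comm _ 1 m, add_assoc]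
  have hnear_f := (hf _).trans (hnear m)
  rw [map_add, map_smul, smul_eq_mul] at hnear_f
  -- `f` norms `dyadicSum w = P m + 2^-m • tail`, so it turns near-minimality of `w m` into this
  have hfw : f (w m) ≤ f (dyadicSum fun i => w (i + m)) + ε m :=
    le_of_mul_le_mul_left (by rw [mul_add]; linarith) (pow_pos (by norm_num) m)
  linarith

theorem exists_lt_norm_of_tendsto_zero {B : ℕ → E} (hB : Bornology.IsBounded (range B))
    (h0 : (0 : E) ∉ closure (convexHull ℝ (range B))) :
    ∃ S : E, ∀ f : E →L[ℝ] ℝ, (∀ v, f v ≤ ‖v‖) →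
      Tendsto (fun k => f (B k)) atTop (𝓝 0) → f S < ‖S‖ := by
  obtain ⟨M, hM⟩ := hB.exists_norm_le
  obtain ⟨d, hd, hball⟩ := Metric.isOpen_iff.1 isClosed_closure.isOpen_compl 0 h0
  have hdK : ∀ v ∈ closure (convexHull ℝ (range B)), d ≤ ‖v‖ := fun v hv =>
    not_lt.1 fun h => hball (mem_ball_zero_iff.2 h) hv
  set T : ℕ → Set E := fun m => convexHull ℝ (B '' Ici m)
  have hT : Antitone T := fun m m' h => convexHull_mono (image_mono (Ici_subset_Ici.2 h))
  have hTM : ∀ m, T m ⊆ Metric.closedBall 0 M := fun m => convexHull_min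
    (by rintro _ ⟨k, -, rfl⟩; exact mem_closedBall_zero_iff.2 (hM _ (mem_range_self k)))
    (convex_closedBall 0 M)
  obtain ⟨w, hwT, hw⟩ := exists_seq_norm_sum_add_le_dyadicSum (fun m => convex_convexHull ℝ _)
    hT (fun m => ⟨B m, subset_convexHull ℝ _ (Set.mem_image_of_mem B Set.self_mem_Ici)⟩) hTM
    (ε := fun m => d / 4 * (2⁻¹ : ℝ) ^ m) (fun m => by positivity)
  have hwM : ∀ m, ‖w m‖ ≤ M := fun m => mem_closedBall_zero_iff.1 (hTM m (hwT m))
  have htail : ∀ m, dyadicSum (fun i => w (i + m)) ∈ closure (T m) := fun m =>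
    dyadicSum_mem_closure (convex_convexHull ℝ _) (fun i => hT (Nat.le_add_left m i) (hwT _))
      (fun i => hwM _)
  refine ⟨dyadicSum w, fun f hf hlim => lt_of_not_ge fun hfS => ?_⟩
  have hlow : ∀ m, d / 2 + d / 2 * (2⁻¹ : ℝ) ^ m ≤ f (dyadicSum fun i => w (i + m)) := by
    intro m
    induction m with
    | zero =>
      have := hdK _ (closure_mono (convexHull_mono (image_subset_range _ _)) (htail 0))
      simp only [add_zero] at this ⊢
      linarith
    | succ m ih =>
      have := apply_dyadicSum_tail_sub_le hwM hw hf hfS m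
      rw [pow_succ]
      linarith
  obtain ⟨N, hN⟩ : ∃ N, f (dyadicSum fun i => w (i + N)) ≤ d / 4 := by
    obtain ⟨N, hN⟩ :=
      eventually_atTop.1 (hlim.eventually (ge_mem_nhds (by positivity : (0 : ℝ) < d / 4)))
    refine ⟨N, closure_minimal (convexHull_min ?_ (convex_halfSpace_le f.toLinearMap.isLinear _))
      (isClosed_le f.continuous continuous_const) (htail N)⟩
    rintro _ ⟨k, hk, rfl⟩
    exact hN k hk
  linarith [hlow N, mul_pos hd (pow_pos (by norm_num : (0 : ℝ) < 2⁻¹) N)]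

end James

theorem ContinuousMultilinearMap.banach_steinhaus {𝕂 : Type*} [NontriviallyNormedField 𝕂]
    {F : Type*} [NormedAddCommGroup F] [NormedSpace 𝕂 F] {ι : Type*} {m : ℕ} {Z : Fin m → Type*}
    [∀ i, NormedAddCommGroup (Z i)] [∀ i, NormedSpace 𝕂 (Z i)] [∀ i, CompleteSpace (Z i)]
    {g : ι → ContinuousMultilinearMap 𝕂 Z F} (h : ∀ x, ∃ C, ∀ i, ‖g i x‖ ≤ C) :
    ∃ C', ∀ i, ‖g i‖ ≤ C' := by
  induction m with
  | zero =>
    obtain ⟨C, hC⟩ := h 0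
    refine ⟨C, fun i => ?_⟩
    have : g i = constOfIsEmpty 𝕂 Z (g i 0) := by
      ext x
      rw [Subsingleton.elim x 0]
      rfl
    rw [this, norm_constOfIsEmpty]
    exact hC i
  | succ m ih =>
    -- currying in the first variable reduces to the linear theorem with values in `m`-linear maps
    let curry := continuousMultilinearCurryLeftEquiv 𝕂 Z F
    have hcurry : ∀ x₀, ∃ C, ∀ i, ‖curry (g i) x₀‖ ≤ C := fun x₀ =>
      ih fun y => (h (Fin.cons x₀ y)).imp fun _ hC i => hC i
    obtain ⟨C', hC'⟩ := _root_.banach_steinhaus hcurry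
    exact ⟨C', fun i => (curry.norm_map (g i)).symm.trans_le (hC' i)⟩

theorem MLNormAttaining.exists_norming_functional [NormedSpace ℝ Y]
    {A : ContinuousMultilinearMap 𝕜 X Y} (hA : MLNormAttaining A) :
    ∃ (x : ∀ i, X i) (f : ContinuousMultilinearMap 𝕜 X Y →L[ℝ] ℝ),
      (∀ V, f V ≤ ‖V‖) ∧ f A = ‖A‖ ∧ ∀ V, ‖f V‖ ≤ ‖V x‖ := by
  obtain ⟨x, hx, hAx⟩ := hA
  obtain ⟨g, hg, hgA⟩ := exists_dual_vector'' 𝕜 (A x)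
  let f := RCLike.reCLM.comp ((g.comp (ContinuousMultilinearMap.apply 𝕜 X Y x)).restrictScalars ℝ)
  have hfx : ∀ V, ‖f V‖ ≤ ‖V x‖ := fun V =>
    calc ‖f V‖ ≤ ‖g (V x)‖ := by simpa [f] using RCLike.abs_re_le_norm (g (V x))
      _ ≤ ‖V x‖ := g.le_of_opNorm_le hg _ |>.trans_eq (one_mul _)
  refine ⟨x, f, fun V => (le_abs_self _).trans ((hfx V).trans ?_), ?_, hfx⟩
  · exact V.unit_le_opNorm ((pi_norm_le_iff_of_nonneg zero_le_one).2 hx)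
  · simp [f, hgA, hAx]

/-- Lemma 2.3: if a norm-closed convex set of continuous `n`-linear operators is not
sequentially closed under pointwise convergence, then some continuous `n`-linear operator
fails to attain its norm. -/
theorem stmt1 [∀ i, CompleteSpace (X i)] [CompleteSpace Y]
    (C : Set (ContinuousMultilinearMap 𝕜 X Y))
    (hclosed : IsClosed C)
    (hconvex : ∀ A ∈ C, ∀ B ∈ C, ∀ t : ℝ, 0 ≤ t → t ≤ 1 →
      ((t : 𝕜) • A + ((1 - t : ℝ) : 𝕜) • B) ∈ C)
    (hnotseqclosed : ∃ (A : ℕ → ContinuousMultilinearMap 𝕜 X Y)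
      (A₀ : ContinuousMultilinearMap 𝕜 X Y), (∀ k, A k ∈ C) ∧ A₀ ∉ C ∧
        ∀ x : ∀ i, X i,
          Filter.Tendsto (fun k => ‖A k x - A₀ x‖) Filter.atTop (nhds 0)) :
    ∃ S : ContinuousMultilinearMap 𝕜 X Y, ¬ MLNormAttaining S := by
  obtain ⟨A, A₀, hAC, hA₀, hlim⟩ := hnotseqclosed
  let _ : NormedSpace ℝ Y := NormedSpace.restrictScalars ℝ 𝕜 Y
  have hC : Convex ℝ C := fun U hU V hV a b ha hb hab => by
    obtain rfl : b = 1 - a := by linarith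
    simpa only [RCLike.real_smul_eq_coe_smul (K := 𝕜)] using hconvex U hU V hV a ha (by linarith)
  let B : ℕ → ContinuousMultilinearMap 𝕜 X Y := fun k => A k - A₀
  have hB : Bornology.IsBounded (range B) := by
    obtain ⟨M, hM⟩ := ContinuousMultilinearMap.banach_steinhaus (g := B) fun x =>
      (Metric.isBounded_range_of_tendsto _
        (tendsto_zero_iff_norm_tendsto_zero.2 (hlim x))).exists_norm_le.imp
          fun _ hc k => hc _ (mem_range_self k)
    exact isBounded_iff_forall_norm_le.2 ⟨M, forall_mem_range.2 hM⟩
  have h0 : (0 : ContinuousMultilinearMap 𝕜 X Y) ∉ closure (convexHull ℝ (range B)) := by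
    have hsub : closure (convexHull ℝ (range B)) ⊆ (fun V => V + A₀) ⁻¹' C :=
      closure_minimal (convexHull_min (range_subset_iff.2 fun k => by simpa [B] using hAC k)
        (hC.translate_preimage_left A₀)) (hclosed.preimage (continuous_add_const A₀))
    exact fun h => hA₀ (by simpa using hsub h)
  obtain ⟨S, hS⟩ := exists_lt_norm_of_tendsto_zero hB h0
  refine ⟨S, fun hS_att => ?_⟩
  obtain ⟨x, f, hf, hfS, hfx⟩ := hS_att.exists_norming_functional
  exact (hS f hf (squeeze_zero_norm (fun k => hfx (B k)) (hlim x))).ne hfS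
end

section
/- Let X₁,…,Xₙ be Banach spaces with the separable complementation property, let Y be an arbitrary Banach space, and let C be the closed unit ball of the space of weakly sequentially continuous continuous n-linear operators from X₁ × ⋯ × Xₙ to Y. Then C is closed in the topology of pointwise (norm) convergence on L(X₁,…,Xₙ;Y) if and only if C is sequentially closed in that topology, i.e. if and only if every A ∈ L(X₁,…,Xₙ;Y) that is the pointwise limit of a sequence from C belongs to C. -/
open Filter Topology

/-- A sequence `x` in a normed space converges weakly to `x₀`. -/
def WeakSeqConv (𝕜 : Type*) [RCLike 𝕜] {Z : Type*} [NormedAddCommGroup Z] [NormedSpace 𝕜 Z]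
    (x : ℕ → Z) (x₀ : Z) : Prop :=
  ∀ φ : Z →L[𝕜] 𝕜, Filter.Tendsto (fun k => φ (x k)) Filter.atTop (nhds (φ x₀))

/-- The separable complementation property: every separable closed subspace is contained in a
separable closed subspace onto which there is a continuous linear projection. -/
def SepComplProp (𝕜 : Type*) [RCLike 𝕜] (Z : Type*) [NormedAddCommGroup Z]
    [NormedSpace 𝕜 Z] : Prop :=
  ∀ S : Submodule 𝕜 Z, IsClosed (S : Set Z) → TopologicalSpace.IsSeparable (S : Set Z) →
    ∃ W : Submodule 𝕜 Z, IsClosed (W : Set Z) ∧ TopologicalSpace.IsSeparable (W : Set Z) ∧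
      S ≤ W ∧ ∃ π : Z →L[𝕜] Z, (∀ x, π x ∈ W) ∧ (∀ w ∈ W, π w = w)

variable {𝕜 : Type*} [RCLike 𝕜] {n : ℕ} {X : Fin n → Type*}
  [∀ i, NormedAddCommGroup (X i)] [∀ i, NormedSpace 𝕜 (X i)]
  {Y : Type*} [NormedAddCommGroup Y] [NormedSpace 𝕜 Y]

/-- A continuous multilinear operator is weakly sequentially continuous. -/
def MLWeaklySeqContinuous (A : ContinuousMultilinearMap 𝕜 X Y) : Prop :=
  ∀ (x : ∀ i, ℕ → X i) (x₀ : ∀ i, X i), (∀ i, WeakSeqConv 𝕜 (x i) (x₀ i)) →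
    Filter.Tendsto (fun k => A (fun i => x i k)) Filter.atTop (nhds (A x₀))

open Set TopologicalSpace

/-!
Sequential closedness always follows from closedness. Conversely, let `A` lie in the pointwise
closure of the ball `C`. The pointwise closure of a norm ball stays in the ball, so `‖A‖ ≤ 1`.
Given weakly convergent sequences `xᵢ → x₀ᵢ`, the separable complementation property gives
projections `πᵢ` with separable ranges fixing all the data. Since `C` is norm bounded it is
equicontinuous, so a sequence in `C` approximating `A` on a countable dense subset of
`∏ᵢ range πᵢ` converges to `A` on all of it. Composing with `π` (and rescaling into the unit
ball) yields a sequence in `C` converging pointwise everywhere to `c • A ∘ π`, which is therefore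
weakly sequentially continuous; as `π` fixes the `xᵢ` and `x₀ᵢ`, so is `A` along them.
-/

theorem exists_seq_tendsto_on_of_mem_closure_image {F α β : Type*} [TopologicalSpace β]
    [FirstCountableTopology β] {φ : F → α → β} {s : Set F} {f : F}
    (hf : φ f ∈ closure (φ '' s)) {D : Set α} (hD : D.Countable) :
    ∃ u : ℕ → F, (∀ k, u k ∈ s) ∧ ∀ x ∈ D, Tendsto (fun k => φ (u k) x) atTop (𝓝 (φ f x)) := by
  have := hD.to_subtype
  let restrict : (α → β) → D → β := fun g x => g x
  have hrestrict : Continuous restrict := continuous_pi fun x => continuous_apply (x : α)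
  have hmem : restrict (φ f) ∈ closure ((restrict ∘ φ) '' s) := by
    rw [image_comp]
    exact mem_closure_image hrestrict.continuousAt hf
  obtain ⟨v, hvs, hv⟩ := mem_closure_iff_seq_limit.1 hmem
  choose u hus huv using hvs
  refine ⟨u, hus, fun x hx => ?_⟩
  simpa [← huv, restrict] using tendsto_pi_nhds.1 hv ⟨x, hx⟩

namespace ContinuousMultilinearMap

variable {𝕜 : Type*} [NontriviallyNormedField 𝕜] {ι : Type*} [Fintype ι] {E : ι → Type*}
  [∀ i, SeminormedAddCommGroup (E i)] [∀ i, NormedSpace 𝕜 (E i)]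
  {G : Type*} [SeminormedAddCommGroup G] [NormedSpace 𝕜 G]

theorem opNorm_le_of_mem_closure_image_coe {C : Set (ContinuousMultilinearMap 𝕜 E G)} {r : ℝ}
    (hC : ∀ B ∈ C, ‖B‖ ≤ r) {A : ContinuousMultilinearMap 𝕜 E G}
    (hA : ⇑A ∈ closure ((⇑) '' C)) : ‖A‖ ≤ r := by
  obtain ⟨_, B, hB, rfl⟩ := closure_nonempty_iff.1 ⟨_, hA⟩
  have hr : 0 ≤ r := (norm_nonneg B).trans (hC B hB)
  have hclosed : IsClosed {g : (∀ i, E i) → G | ∀ m, ‖g m‖ ≤ r * ∏ i, ‖m i‖} := by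
    simpa only [ofPred_forall] using
      isClosed_iInter fun m => isClosed_le (continuous_apply m).norm continuous_const
  refine A.opNorm_le_bound hr (hclosed.closure_subset_iff.2 ?_ hA)
  rintro _ ⟨B, hB, rfl⟩ m
  exact (B.le_opNorm m).trans (by gcongr; exact hC B hB)

theorem equicontinuous_of_norm_le {κ : Type*} {B : κ → ContinuousMultilinearMap 𝕜 E G} {r : ℝ}
    (hB : ∀ k, ‖B k‖ ≤ r) : Equicontinuous fun k => ⇑(B k) := by
  intro x₀
  set L := r * Fintype.card ι * (‖x₀‖ + 1) ^ (Fintype.card ι - 1) with hL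
  refine Metric.equicontinuousAt_of_continuity_modulus (fun x => L * ‖x₀ - x‖) ?_ _ ?_
  · simpa using ((continuous_sub_left x₀).norm.const_mul L).tendsto x₀
  · filter_upwards [Metric.ball_mem_nhds x₀ one_pos] with x hx k
    have hr : 0 ≤ r := (norm_nonneg _).trans (hB k)
    have hx : ‖x‖ ≤ ‖x₀‖ + 1 := by
      rw [mem_ball_iff_norm] at hx
      linarith [norm_le_norm_add_norm_sub' x x₀]
    rw [dist_eq_norm]
    calc ‖B k x₀ - B k x‖
        ≤ ‖B k‖ * Fintype.card ι * max ‖x₀‖ ‖x‖ ^ (Fintype.card ι - 1) * ‖x₀ - x‖ :=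
          (B k).norm_image_sub_le x₀ x
      _ ≤ L * ‖x₀ - x‖ := by
          rw [hL]
          gcongr
          · exact hB k
          · exact max_le (by linarith) hx

theorem exists_seq_tendsto_on_of_mem_closure {C : Set (ContinuousMultilinearMap 𝕜 E G)} {r : ℝ}
    (hC : ∀ B ∈ C, ‖B‖ ≤ r) {A : ContinuousMultilinearMap 𝕜 E G}
    (hA : ⇑A ∈ closure ((⇑) '' C)) {T : Set (∀ i, E i)} (hT : IsSeparable T) :
    ∃ B : ℕ → ContinuousMultilinearMap 𝕜 E G,
      (∀ k, B k ∈ C) ∧ ∀ x ∈ T, Tendsto (fun k => B k x) atTop (𝓝 (A x)) := by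
  obtain ⟨D, hD, hTD⟩ := hT
  obtain ⟨B, hBC, hBD⟩ := exists_seq_tendsto_on_of_mem_closure_image hA hD
  have hclosed : IsClosed {x | Tendsto (fun k => B k x) atTop (𝓝 (A x))} :=
    (equicontinuous_of_norm_le fun k => hC _ (hBC k)).isClosed_setOfPred_tendsto A.cont
  exact ⟨B, hBC, fun x hx => hclosed.closure_subset_iff.2 hBD (hTD hx)⟩

theorem exists_ne_zero_norm_smul_compContinuousLinearMap_le (π : ∀ i, E i →L[𝕜] E i) :
    ∃ c : 𝕜, c ≠ 0 ∧
      ∀ B : ContinuousMultilinearMap 𝕜 E G, ‖c • B.compContinuousLinearMap π‖ ≤ ‖B‖ := by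
  set P := ∏ i, ‖π i‖
  have hP : 0 ≤ P := by positivity
  obtain ⟨c, hc0, hc⟩ :=
    NormedField.exists_norm_lt 𝕜 (inv_pos.2 (add_pos_of_nonneg_of_pos hP one_pos))
  refine ⟨c, norm_pos_iff.1 hc0, fun B => ?_⟩
  have hcP : ‖c‖ * P ≤ 1 := by
    rw [← one_div, lt_div_iff₀ (by positivity)] at hc
    nlinarith
  calc ‖c • B.compContinuousLinearMap π‖ ≤ ‖c‖ * (‖B‖ * P) := by
        grw [opNorm_smul_le, norm_compContinuousLinearMap_le]
    _ = (‖c‖ * P) * ‖B‖ := by ring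
    _ ≤ ‖B‖ := mul_le_of_le_one_left (norm_nonneg B) hcP

end ContinuousMultilinearMap

theorem WeakSeqConv.map {Z Z' : Type*} [NormedAddCommGroup Z] [NormedSpace 𝕜 Z]
    [NormedAddCommGroup Z'] [NormedSpace 𝕜 Z'] {x : ℕ → Z} {x₀ : Z} (h : WeakSeqConv 𝕜 x x₀)
    (π : Z →L[𝕜] Z') : WeakSeqConv 𝕜 (fun k => π (x k)) (π x₀) :=
  fun φ => h (φ.comp π)

theorem SepComplProp.exists_proj {Z : Type*} [NormedAddCommGroup Z] [NormedSpace 𝕜 Z]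
    (h : SepComplProp 𝕜 Z) {s : Set Z} (hs : s.Countable) :
    ∃ π : Z →L[𝕜] Z, IsSeparable (range π) ∧ ∀ z ∈ s, π z = z := by
  have hsep : IsSeparable ((Submodule.span 𝕜 s).topologicalClosure : Set Z) := by
    rw [Submodule.topologicalClosure_coe]
    exact (hs.isSeparable.span (R := 𝕜)).closure
  obtain ⟨W, -, hWsep, hsW, π, hπW, hπ⟩ :=
    h _ (Submodule.isClosed_topologicalClosure _) hsep
  refine ⟨π, hWsep.mono (range_subset_iff.2 hπW), fun z hz => hπ z (hsW ?_)⟩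
  exact Submodule.le_topologicalClosure _ (Submodule.subset_span hz)

namespace MLWeaklySeqContinuous

variable {A : ContinuousMultilinearMap 𝕜 X Y}

theorem smul (hA : MLWeaklySeqContinuous A) (c : 𝕜) : MLWeaklySeqContinuous (c • A) :=
  fun x x₀ hx => (hA x x₀ hx).const_smul c

theorem of_smul {c : 𝕜} (hc : c ≠ 0) (h : MLWeaklySeqContinuous (c • A)) :
    MLWeaklySeqContinuous A := by
  simpa only [inv_smul_smul₀ hc] using h.smul c⁻¹

theorem compContinuousLinearMap {X' : Fin n → Type*} [∀ i, NormedAddCommGroup (X' i)]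
    [∀ i, NormedSpace 𝕜 (X' i)] (hA : MLWeaklySeqContinuous A) (π : ∀ i, X' i →L[𝕜] X i) :
    MLWeaklySeqContinuous (A.compContinuousLinearMap π) :=
  fun _ _ hx => hA _ _ fun i => (hx i).map (π i)

theorem tendsto_of_compContinuousLinearMap {π : ∀ i, X i →L[𝕜] X i}
    (hA : MLWeaklySeqContinuous (A.compContinuousLinearMap π)) {x : ∀ i, ℕ → X i}
    {x₀ : ∀ i, X i} (hx : ∀ i, WeakSeqConv 𝕜 (x i) (x₀ i)) (hπx : ∀ i k, π i (x i k) = x i k)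
    (hπx₀ : ∀ i, π i (x₀ i) = x₀ i) :
    Tendsto (fun k => A fun i => x i k) atTop (𝓝 (A x₀)) := by
  simpa [hπx, hπx₀] using hA x x₀ hx

theorem of_mem_closure (hSCP : ∀ i, SepComplProp 𝕜 (X i))
    (hseq : ∀ A : ContinuousMultilinearMap 𝕜 X Y,
      (∃ B : ℕ → ContinuousMultilinearMap 𝕜 X Y,
        (∀ k, MLWeaklySeqContinuous (B k) ∧ ‖B k‖ ≤ 1) ∧
        ∀ x : ∀ i, X i, Tendsto (fun k => B k x) atTop (𝓝 (A x))) →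
      MLWeaklySeqContinuous A ∧ ‖A‖ ≤ 1)
    (hA : ⇑A ∈ closure ((⇑) '' {B : ContinuousMultilinearMap 𝕜 X Y |
      MLWeaklySeqContinuous B ∧ ‖B‖ ≤ 1})) :
    MLWeaklySeqContinuous A := by
  intro x x₀ hx
  choose π hπsep hπ using fun i =>
    (hSCP i).exists_proj ((countable_range (x i)).union (countable_singleton (x₀ i)))
  obtain ⟨B, hBC, hBA⟩ := ContinuousMultilinearMap.exists_seq_tendsto_on_of_mem_closure
    (fun B hB => hB.2) hA (IsSeparable.univ_pi hπsep)
  obtain ⟨c, hc0, hc⟩ :=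
    ContinuousMultilinearMap.exists_ne_zero_norm_smul_compContinuousLinearMap_le (G := Y) π
  have hcA : MLWeaklySeqContinuous (c • A.compContinuousLinearMap π) := by
    refine (hseq _ ⟨fun k => c • (B k).compContinuousLinearMap π, fun k => ⟨?_, ?_⟩,
      fun z => ?_⟩).1
    · exact ((hBC k).1.compContinuousLinearMap π).smul c
    · exact (hc (B k)).trans (hBC k).2
    · exact (hBA _ fun i _ => mem_range_self (z i)).const_smul c
  exact (hcA.of_smul hc0).tendsto_of_compContinuousLinearMap hx
    (fun i k => hπ i _ (Or.inl ⟨k, rfl⟩)) (fun i => hπ i _ (Or.inr rfl))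

end MLWeaklySeqContinuous

theorem stmt2_general
    (hSCP : ∀ i, SepComplProp 𝕜 (X i)) :
    @IsClosed _ (TopologicalSpace.induced
        (fun A : ContinuousMultilinearMap 𝕜 X Y => (fun x => A x : (∀ i, X i) → Y))
        Pi.topologicalSpace)
      {A : ContinuousMultilinearMap 𝕜 X Y | MLWeaklySeqContinuous A ∧ ‖A‖ ≤ 1} ↔
    (∀ A : ContinuousMultilinearMap 𝕜 X Y,
      (∃ B : ℕ → ContinuousMultilinearMap 𝕜 X Y,
        (∀ k, MLWeaklySeqContinuous (B k) ∧ ‖B k‖ ≤ 1) ∧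
        ∀ x : ∀ i, X i,
          Filter.Tendsto (fun k => B k x) Filter.atTop (nhds (A x))) →
      MLWeaklySeqContinuous A ∧ ‖A‖ ≤ 1) := by
  rw [isClosed_induced_iff']
  constructor
  · rintro hC A ⟨B, hB, hBA⟩
    exact hC A (mem_closure_of_tendsto (tendsto_pi_nhds.2 hBA)
      (Eventually.of_forall fun k => mem_image_of_mem _ (hB k)))
  · intro hseq A hA
    exact ⟨.of_mem_closure hSCP hseq hA,
      ContinuousMultilinearMap.opNorm_le_of_mem_closure_image_coe (fun B hB => hB.2) hA⟩

/-- Lemma 2.4: for `C` the closed unit ball of the weakly sequentially continuous `n`-linear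
operators, closedness in the topology of pointwise convergence is equivalent to sequential
closedness in that topology. -/
theorem stmt2 [∀ i, CompleteSpace (X i)] [CompleteSpace Y]
    (hSCP : ∀ i, SepComplProp 𝕜 (X i)) :
    @IsClosed _ (TopologicalSpace.induced
        (fun A : ContinuousMultilinearMap 𝕜 X Y => (fun x => A x : (∀ i, X i) → Y))
        Pi.topologicalSpace)
      {A : ContinuousMultilinearMap 𝕜 X Y | MLWeaklySeqContinuous A ∧ ‖A‖ ≤ 1} ↔
    (∀ A : ContinuousMultilinearMap 𝕜 X Y,
      (∃ B : ℕ → ContinuousMultilinearMap 𝕜 X Y,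
        (∀ k, MLWeaklySeqContinuous (B k) ∧ ‖B k‖ ≤ 1) ∧
        ∀ x : ∀ i, X i,
          Filter.Tendsto (fun k => B k x) Filter.atTop (nhds (A x))) →
      MLWeaklySeqContinuous A ∧ ‖A‖ ≤ 1) :=
  stmt2_general hSCP
end

section
/- Let X be a Banach space with the separable complementation property, let Y be an arbitrary Banach space, and let C be the closed unit ball of the space of weakly sequentially continuous continuous n-homogeneous polynomials from X to Y. Then C is closed in the topology of pointwise (norm) convergence on the space of continuous n-homogeneous polynomials from X to Y if and only if C is sequentially closed in that topology, i.e. if and only if every continuous n-homogeneous polynomial that is the pointwise limit of a sequence from C belongs to C. -/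
open Filter Topology

variable {𝕜 : Type*} [RCLike 𝕜] {n : ℕ} {X : Type*}
  [NormedAddCommGroup X] [NormedSpace 𝕜 X]
  {Y : Type*} [NormedAddCommGroup Y] [NormedSpace 𝕜 Y]

/-- A continuous `n`-linear map on `Xⁿ` is symmetric; a continuous `n`-homogeneous polynomial
is (identified with) a symmetric continuous `n`-linear map `T`, via `P x = T (x, …, x)`. -/
def IsSymmML (T : ContinuousMultilinearMap 𝕜 (fun _ : Fin n => X) Y) : Prop :=
  ∀ (σ : Equiv.Perm (Fin n)) (x : Fin n → X), T (x ∘ σ) = T x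

/-- The norm of the `n`-homogeneous polynomial associated to `T`. -/
noncomputable def polyNorm (T : ContinuousMultilinearMap 𝕜 (fun _ : Fin n => X) Y) : ℝ :=
  sSup ((fun x => ‖T (fun _ => x)‖) '' Metric.closedBall (0 : X) 1)

/-- The polynomial associated to `T` is weakly sequentially continuous. -/
def PolyWeaklySeqContinuous (T : ContinuousMultilinearMap 𝕜 (fun _ : Fin n => X) Y) : Prop :=
  ∀ (x : ℕ → X) (x₀ : X), WeakSeqConv 𝕜 x x₀ →
    Filter.Tendsto (fun k => T (fun _ => x k)) Filter.atTop (nhds (T (fun _ => x₀)))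

/-!
Only "sequentially closed ⇒ closed" needs an argument, and the norm bound passes to pointwise limits
directly. By polarization a symmetric `n`-linear map has norm at most `nⁿ / n!` times the norm of
its polynomial, so the polynomials in the unit ball form an equicontinuous family. Hence a point `T`
of the pointwise closure of the ball is, on any separable subspace `W`, the pointwise limit of a
sequence `Q k` from the ball: approximate `T` on a countable dense subset of `W` and extend by
equicontinuity. Given a weakly convergent sequence, put it into a separable subspace `W`
complemented by a projection `π`. The polynomials `c • Q k ∘ π` lie in the ball and converge
pointwise on all of `X` to `c • T ∘ π`, which is therefore weakly sequentially continuous; since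
`T ∘ π = T` on `W`, so is `T` along the given sequence.
-/

namespace ContinuousMultilinearMap

lemma apply_const_smul (T : ContinuousMultilinearMap 𝕜 (fun _ : Fin n => X) Y) (c : 𝕜) (x : X) :
    T (fun _ => c • x) = c ^ n • T (fun _ => x) := by
  simpa using T.map_smul_univ (fun _ => c) (fun _ => x)

lemma apply_const_sum_smul (T : ContinuousMultilinearMap 𝕜 (fun _ : Fin n => X) Y)
    (c : Fin n → 𝕜) (x : Fin n → X) :
    T (fun _ => ∑ i, c i • x i) = ∑ f : Fin n → Fin n, (∏ k, c (f k)) • T (x ∘ f) := by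
  classical
  rw [T.map_sum (fun _ i => c i • x i)]
  exact Finset.sum_congr rfl fun f _ => T.map_smul_univ (c ∘ f) (x ∘ f)

lemma opNorm_le_of_unit_norm {ι : Type*} [Fintype ι] {E : ι → Type*}
    [∀ i, NormedAddCommGroup (E i)] [∀ i, NormedSpace 𝕜 (E i)]
    (f : ContinuousMultilinearMap 𝕜 E Y) {C : ℝ} (hC : 0 ≤ C)
    (hf : ∀ m : ∀ i, E i, (∀ i, ‖m i‖ = 1) → ‖f m‖ ≤ C) : ‖f‖ ≤ C := by
  refine f.opNorm_le_bound hC fun m => ?_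
  by_cases! hm : ∃ i, m i = 0
  · obtain ⟨i, hi⟩ := hm
    rw [f.map_coord_zero i hi, norm_zero]
    positivity
  have hunit : ∀ i, ‖(‖m i‖⁻¹ : 𝕜) • m i‖ = 1 := fun i => by
    rw [norm_smul, norm_inv, RCLike.norm_ofReal, abs_norm,
      inv_mul_cancel₀ (norm_ne_zero_iff.mpr (hm i))]
  have hscale : f m = (∏ i, (‖m i‖ : 𝕜)) • f (fun i => (‖m i‖⁻¹ : 𝕜) • m i) := by
    rw [← f.map_smul_univ]
    congr 1
    ext i
    rw [smul_inv_smul₀ (by simpa using hm i)]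
  rw [hscale, norm_smul, norm_prod, mul_comm]
  simp only [RCLike.norm_ofReal, abs_norm]
  exact mul_le_mul_of_nonneg_right (hf _ hunit) (by positivity)

lemma equicontinuous_apply_const {ι : Type*}
    (F : ι → ContinuousMultilinearMap 𝕜 (fun _ : Fin n => X) Y) {M : ℝ} (hF : ∀ i, ‖F i‖ ≤ M) :
    Equicontinuous fun i (x : X) => F i (fun _ => x) := by
  intro x₀
  refine Metric.equicontinuousAt_of_continuity_modulus
    (fun x => M * n * max ‖x₀‖ ‖x‖ ^ (n - 1) * ‖x₀ - x‖) ?_ _ (Eventually.of_forall fun x i => ?_)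
  · simpa using ((by fun_prop : Continuous fun x : X =>
      M * n * max ‖x₀‖ ‖x‖ ^ (n - 1) * ‖x₀ - x‖).tendsto x₀)
  · have hM : 0 ≤ M := (norm_nonneg _).trans (hF i)
    rw [dist_eq_norm]
    refine ((F i).norm_image_sub_le _ _).trans ?_
    simp only [Fintype.card_fin]
    gcongr
    · exact hF i
    · exact pi_norm_const_le x₀
    · exact pi_norm_const_le x
    · exact pi_norm_const_le (x₀ - x)

end ContinuousMultilinearMap

section PolyNorm

variable (T : ContinuousMultilinearMap 𝕜 (fun _ : Fin n => X) Y)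

lemma norm_apply_le_polyNorm {x : X} (hx : ‖x‖ ≤ 1) : ‖T (fun _ => x)‖ ≤ polyNorm T := by
  refine le_csSup ⟨‖T‖, ?_⟩ ⟨x, mem_closedBall_zero_iff.mpr hx, rfl⟩
  rintro - ⟨y, hy, rfl⟩
  refine (T.le_opNorm _).trans (mul_le_of_le_one_right (norm_nonneg T) ?_)
  rw [Finset.prod_const]
  exact pow_le_one₀ (norm_nonneg y) (mem_closedBall_zero_iff.mp hy)

lemma polyNorm_nonneg : 0 ≤ polyNorm T :=
  (norm_nonneg _).trans (norm_apply_le_polyNorm T (x := 0) (by simp))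

lemma polyNorm_le {a : ℝ} (ha : 0 ≤ a) (h : ∀ x : X, ‖x‖ ≤ 1 → ‖T (fun _ => x)‖ ≤ a) :
    polyNorm T ≤ a :=
  Real.sSup_le (by rintro - ⟨x, hx, rfl⟩; exact h x (mem_closedBall_zero_iff.mp hx)) ha

lemma norm_apply_le_polyNorm_mul (x : X) : ‖T (fun _ => x)‖ ≤ polyNorm T * ‖x‖ ^ n := by
  rcases eq_or_ne x 0 with rfl | hx
  · rcases n.eq_zero_or_pos with rfl | hn
    · simpa using norm_apply_le_polyNorm T (x := 0) (by simp)
    · simp [T.map_coord_zero (m := fun _ => 0) ⟨0, hn⟩ rfl, zero_pow hn.ne']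
  · have hx' : ‖(‖x‖⁻¹ : 𝕜) • x‖ = 1 := by
      rw [norm_smul, norm_inv, RCLike.norm_ofReal, abs_norm,
        inv_mul_cancel₀ (norm_ne_zero_iff.mpr hx)]
    have hscale := T.apply_const_smul (‖x‖ : 𝕜) ((‖x‖⁻¹ : 𝕜) • x)
    rw [smul_inv_smul₀ (by simpa using hx)] at hscale
    rw [hscale, norm_smul, norm_pow, RCLike.norm_ofReal, abs_norm, mul_comm]
    exact mul_le_mul_of_nonneg_right (norm_apply_le_polyNorm T hx'.le) (by positivity)

end PolyNorm

section SignCharacter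

def signChar (f : Fin n → Fin n) : (Fin n → ℤˣ) →* ℤ where
  toFun s := ((∏ i, s i * s (f i) : ℤˣ) : ℤ)
  map_one' := by simp
  map_mul' s t := by
    simp only [Pi.mul_apply, ← Units.val_mul, ← Finset.prod_mul_distrib]
    congr 2
    ext i
    simp only [Units.val_mul]
    ring

lemma signChar_apply (f : Fin n → Fin n) (s : Fin n → ℤˣ) :
    signChar f s = ((∏ i, s i * s (f i) : ℤˣ) : ℤ) := rfl

lemma signChar_eq_one_iff {f : Fin n → Fin n} : signChar f = 1 ↔ f.Bijective := by
  refine ⟨fun h => ?_, fun hf => ?_⟩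
  · by_contra hf
    obtain ⟨j, hj⟩ : ∃ j, ∀ i, f i ≠ j := by
      simpa [Function.Surjective] using mt Finite.surjective_iff_bijective.mp hf
    have := DFunLike.congr_fun h (Pi.mulSingle j (-1))
    simp [signChar_apply, Pi.mulSingle_eq_of_ne (hj _)] at this
  · refine MonoidHom.ext fun s => ?_
    rw [signChar_apply, Finset.prod_mul_distrib, hf.prod_comp s]
    simp [Int.units_mul_self]

lemma sum_signChar (f : Fin n → Fin n) :
    ∑ s, signChar f s = if f.Bijective then 2 ^ n else 0 := by
  classical
  -- orthogonality: a nontrivial character of a finite group sums to zero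
  simp [sum_hom_units, signChar_eq_one_iff, Fintype.card_units_int]

lemma norm_intCast_units (u : ℤˣ) : ‖((u : ℤ) : 𝕜)‖ = 1 := by
  rcases Int.units_eq_one_or u with rfl | rfl <;> simp

end SignCharacter

namespace IsSymmML

open Finset

variable {T : ContinuousMultilinearMap 𝕜 (fun _ : Fin n => X) Y}

theorem polarization (hT : IsSymmML T) (x : Fin n → X) :
    ∑ s : Fin n → ℤˣ, (((∏ i, s i : ℤˣ) : ℤ) : 𝕜) • T (fun _ => ∑ i, ((s i : ℤ) : 𝕜) • x i)
      = ((2 ^ n * n.factorial : ℕ) : 𝕜) • T x := by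
  classical
  have hchar : ∀ (s : Fin n → ℤˣ) (f : Fin n → Fin n),
      (((∏ i, s i : ℤˣ) : ℤ) : 𝕜) * ∏ k, ((s (f k) : ℤ) : 𝕜) = (signChar f s : 𝕜) := by
    intro s f
    simp [signChar_apply, prod_mul_distrib]
  have hcard : #{f : Fin n → Fin n | f.Bijective} = n.factorial := by
    rw [← Fintype.card_subtype, Fintype.card_congr Equiv.bijectiveEquiv, Fintype.card_perm,
      Fintype.card_fin]
  calc ∑ s : Fin n → ℤˣ, (((∏ i, s i : ℤˣ) : ℤ) : 𝕜) • T (fun _ => ∑ i, ((s i : ℤ) : 𝕜) • x i)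
      = ∑ f : Fin n → Fin n, ((∑ s, signChar f s : ℤ) : 𝕜) • T (x ∘ f) := by
        simp only [T.apply_const_sum_smul, smul_sum, smul_smul, hchar]
        rw [sum_comm]
        simp [sum_smul]
    _ = ∑ f : Fin n → Fin n, if f.Bijective then (2 : 𝕜) ^ n • T x else 0 := by
        refine sum_congr rfl fun f _ => ?_
        rw [sum_signChar]
        split_ifs with hf
        · rw [show x ∘ f = x ∘ Equiv.ofBijective f hf from rfl, hT]
          simp
        · simp
    _ = ((2 ^ n * n.factorial : ℕ) : 𝕜) • T x := by
        rw [sum_ite, sum_const_zero, add_zero, sum_const, hcard, ← Nat.cast_smul_eq_nsmul 𝕜,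
          smul_smul, Nat.cast_mul, Nat.cast_pow, Nat.cast_ofNat, mul_comm]

lemma norm_apply_le_polyNorm (hT : IsSymmML T) (x : Fin n → X) (hx : ∀ i, ‖x i‖ ≤ 1) :
    ‖T x‖ ≤ n ^ n / n.factorial * polyNorm T := by
  have hterm : ∀ s : Fin n → ℤˣ,
      ‖(((∏ i, s i : ℤˣ) : ℤ) : 𝕜) • T (fun _ => ∑ i, ((s i : ℤ) : 𝕜) • x i)‖
        ≤ polyNorm T * n ^ n := by
    intro s
    have hsum : ‖∑ i, ((s i : ℤ) : 𝕜) • x i‖ ≤ n :=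
      (norm_sum_le _ _).trans <| by
        simpa [norm_smul, norm_intCast_units] using sum_le_sum fun i (_ : i ∈ univ) => hx i
    rw [norm_smul, norm_intCast_units, one_mul]
    exact (norm_apply_le_polyNorm_mul T _).trans <| by gcongr; exact polyNorm_nonneg T
  have key : (2 ^ n * n.factorial : ℝ) * ‖T x‖ ≤ 2 ^ n * (polyNorm T * n ^ n) :=
    calc (2 ^ n * n.factorial : ℝ) * ‖T x‖ = ‖((2 ^ n * n.factorial : ℕ) : 𝕜) • T x‖ := by
          rw [norm_smul, RCLike.norm_natCast]
          push_cast
          rfl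
      _ ≤ ∑ s : Fin n → ℤˣ,
            ‖(((∏ i, s i : ℤˣ) : ℤ) : 𝕜) • T (fun _ => ∑ i, ((s i : ℤ) : 𝕜) • x i)‖ := by
          rw [← hT.polarization x]
          exact norm_sum_le _ _
      _ ≤ 2 ^ n * (polyNorm T * n ^ n) :=
          (sum_le_sum fun s _ => hterm s).trans (by simp [Fintype.card_units_int])
  rw [div_mul_eq_mul_div, le_div_iff₀ (by positivity)]
  nlinarith [pow_pos (two_pos : (0 : ℝ) < 2) n]

lemma opNorm_le_polyNorm (hT : IsSymmML T) : ‖T‖ ≤ n ^ n / n.factorial * polyNorm T :=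
  T.opNorm_le_of_unit_norm (by have := polyNorm_nonneg T; positivity)
    fun x hx => hT.norm_apply_le_polyNorm x fun i => (hx i).le

end IsSymmML

section PointwiseTopology

variable {α Z E : Type*} [TopologicalSpace α] {f : α → Z → E}

lemma IsClosed.mem_of_forall_tendsto_apply [TopologicalSpace E] (hf : IsInducing f) {S : Set α}
    (hS : IsClosed S) {B : ℕ → α} (hB : ∀ k, B k ∈ S) {T : α}
    (hBT : ∀ z, Tendsto (fun k => f (B k) z) atTop (𝓝 (f T z))) : T ∈ S :=
  hS.mem_of_tendsto (hf.tendsto_nhds_iff.mpr (tendsto_pi_nhds.mpr hBT)) (Eventually.of_forall hB)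

lemma isClosed_setOf_forall_norm_apply_le [SeminormedAddCommGroup E]
    (hf : IsInducing f) (K : Set Z) (r : ℝ) : IsClosed {a | ∀ z ∈ K, ‖f a z‖ ≤ r} := by
  simp only [Set.ofPred_forall]
  exact isClosed_biInter fun z _ =>
    isClosed_le ((continuous_apply z).comp hf.continuous).norm continuous_const

lemma exists_seq_tendsto_on_of_mem_closure [PseudoMetricSpace E] [TopologicalSpace Z]
    (hf : IsInducing f) {S : Set α} (hS : Equicontinuous fun a : S => f a) {T : α}
    (hTc : Continuous (f T)) (hT : T ∈ closure S) {V : Set Z}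
    (hV : TopologicalSpace.IsSeparable V) :
    ∃ Q : ℕ → α, (∀ k, Q k ∈ S) ∧ ∀ v ∈ V, Tendsto (fun k => f (Q k) v) atTop (𝓝 (f T v)) := by
  obtain ⟨D, hD, hVD⟩ := hV
  have := hD.to_subtype
  let r : α → D → E := fun a z => f a z
  have hr : Continuous r := continuous_pi fun z => (continuous_apply z.1).comp hf.continuous
  obtain ⟨u, hu, hlim⟩ := mem_closure_iff_seq_limit.mp (mem_closure_image hr.continuousAt hT)
  choose Q hQS hQu using hu
  refine ⟨Q, hQS, fun v hv => ?_⟩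
  have hclosed := (hS.comp fun k => (⟨Q k, hQS k⟩ : S)).isClosed_setOfPred_tendsto hTc (l := atTop)
  refine closure_minimal (fun z hz => ?_) hclosed (hVD hv)
  simpa [← hQu, r] using tendsto_pi_nhds.mp hlim ⟨z, hz⟩

end PointwiseTopology

lemma SepComplProp.exists_projection (h : SepComplProp 𝕜 X) {s : Set X} (hs : s.Countable) :
    ∃ W : Submodule 𝕜 X, TopologicalSpace.IsSeparable (W : Set X) ∧ s ⊆ W ∧
      ∃ π : X →L[𝕜] X, (∀ x, π x ∈ W) ∧ ∀ w ∈ W, π w = w := by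
  obtain ⟨W, -, hWsep, hsW, hπ⟩ := h (Submodule.span 𝕜 s).topologicalClosure
    (Submodule.isClosed_topologicalClosure _)
    (by simpa only [Submodule.topologicalClosure_coe] using hs.isSeparable.span.closure)
  exact ⟨W, hWsep, Submodule.subset_span.trans
    ((Submodule.le_topologicalClosure _).trans hsW), hπ⟩

section SmulComp

variable (T : ContinuousMultilinearMap 𝕜 (fun _ : Fin n => X) Y) (c : 𝕜) (π : X →L[𝕜] X)

lemma IsSymmML.smul_comp (hT : IsSymmML T) :
    IsSymmML (c • T.compContinuousLinearMap fun _ => π) :=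
  fun σ x => congrArg (c • ·) (hT σ fun i => π (x i))

lemma PolyWeaklySeqContinuous.smul_comp (hT : PolyWeaklySeqContinuous T) :
    PolyWeaklySeqContinuous (c • T.compContinuousLinearMap fun _ => π) :=
  fun _ _ hx => (hT _ _ fun φ => hx (φ.comp π)).const_smul c

lemma polyNorm_smul_comp_le :
    polyNorm (c • T.compContinuousLinearMap fun _ => π) ≤ ‖c‖ * ‖π‖ ^ n * polyNorm T := by
  have := polyNorm_nonneg T
  refine polyNorm_le _ (by positivity) fun x hx => ?_
  calc ‖c • T (fun _ => π x)‖ ≤ ‖c‖ * (polyNorm T * ‖π x‖ ^ n) := by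
        rw [norm_smul]; gcongr; exact norm_apply_le_polyNorm_mul T (π x)
    _ ≤ ‖c‖ * (polyNorm T * ‖π‖ ^ n) := by
        gcongr; exact (π.le_opNorm_of_le hx).trans_eq (mul_one _)
    _ = ‖c‖ * ‖π‖ ^ n * polyNorm T := by ring

end SmulComp

variable (𝕜 n X Y) in
abbrev SymmPoly := {T : ContinuousMultilinearMap 𝕜 (fun _ : Fin n => X) Y // IsSymmML T}

variable (𝕜 n X Y) in
def wscUnitBall : Set (SymmPoly 𝕜 n X Y) :=
  {T | PolyWeaklySeqContinuous T.1 ∧ polyNorm T.1 ≤ 1}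

lemma equicontinuous_wscUnitBall :
    Equicontinuous fun (T : wscUnitBall 𝕜 n X Y) (x : X) => T.1.1 fun _ => x :=
  ContinuousMultilinearMap.equicontinuous_apply_const _ fun T =>
    T.1.2.opNorm_le_polyNorm.trans
      (mul_le_of_le_one_right (by positivity) T.2.2)

section WscUnitBall

variable [TopologicalSpace (SymmPoly 𝕜 n X Y)]

lemma polyNorm_le_one_of_mem_closure
    (hind : IsInducing fun (T : SymmPoly 𝕜 n X Y) (x : X) => T.1 fun _ => x)
    {T : SymmPoly 𝕜 n X Y} (hT : T ∈ closure (wscUnitBall 𝕜 n X Y)) : polyNorm T.1 ≤ 1 := by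
  refine polyNorm_le _ zero_le_one fun x hx => ?_
  refine closure_minimal (fun Q hQ y hy => ?_)
    (isClosed_setOf_forall_norm_apply_le hind (Metric.closedBall 0 1) 1) hT x
    (mem_closedBall_zero_iff.mpr hx)
  exact (norm_apply_le_polyNorm Q.1 (mem_closedBall_zero_iff.mp hy)).trans hQ.2

lemma polyWeaklySeqContinuous_of_mem_closure
    (hind : IsInducing fun (T : SymmPoly 𝕜 n X Y) (x : X) => T.1 fun _ => x)
    (hSCP : SepComplProp 𝕜 X)
    (hseq : ∀ T : SymmPoly 𝕜 n X Y, (∃ B : ℕ → SymmPoly 𝕜 n X Y, (∀ k, B k ∈ wscUnitBall 𝕜 n X Y) ∧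
      ∀ x : X, Tendsto (fun k => (B k).1 fun _ => x) atTop (𝓝 (T.1 fun _ => x))) →
        T ∈ wscUnitBall 𝕜 n X Y)
    {T : SymmPoly 𝕜 n X Y} (hT : T ∈ closure (wscUnitBall 𝕜 n X Y)) :
    PolyWeaklySeqContinuous T.1 := by
  intro x x₀ hx
  obtain ⟨W, hWsep, hxW, π, hπW, hπ⟩ :=
    hSCP.exists_projection ((Set.countable_range x).insert x₀)
  obtain ⟨Q, hQ, hQT⟩ := exists_seq_tendsto_on_of_mem_closure hind equicontinuous_wscUnitBall
    (T.1.cont.comp (continuous_pi fun _ => continuous_id)) hT hWsep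
  -- `c` brings `Q k ∘ π` back into the unit ball; the `+ 1` keeps it nonzero
  set c : 𝕜 := ((((‖π‖ + 1) ^ n)⁻¹ : ℝ) : 𝕜)
  have hc : c ≠ 0 := by simp only [c, ne_eq, RCLike.ofReal_eq_zero]; positivity
  have hcπ : ‖c‖ * ‖π‖ ^ n ≤ 1 := by
    rw [RCLike.norm_ofReal, abs_of_pos (by positivity), inv_mul_le_one₀ (by positivity)]
    gcongr
    linarith
  have hTπ := (hseq ⟨_, T.2.smul_comp _ c π⟩
    ⟨fun k => ⟨_, (Q k).2.smul_comp _ c π⟩,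
      fun k => ⟨(hQ k).1.smul_comp _ c π, (polyNorm_smul_comp_le _ c π).trans <|
        (mul_le_of_le_one_right (by positivity) (hQ k).2).trans hcπ⟩,
      fun z => (hQT (π z) (hπW z)).const_smul c⟩).1 x x₀ hx
  have hπx : ∀ k, π (x k) = x k := fun k => hπ _ (hxW (Set.mem_insert_of_mem _ ⟨k, rfl⟩))
  simpa [hπx, hπ x₀ (hxW (Set.mem_insert _ _)), tendsto_const_smul_iff₀ hc] using hTπ

end WscUnitBall

theorem stmt8_general
    (hSCP : SepComplProp 𝕜 X) :
    @IsClosed _ (TopologicalSpace.induced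
        (fun T : {T : ContinuousMultilinearMap 𝕜 (fun _ : Fin n => X) Y // IsSymmML T} =>
          (fun x => T.1 (fun _ => x) : X → Y))
        Pi.topologicalSpace)
      {T : {T : ContinuousMultilinearMap 𝕜 (fun _ : Fin n => X) Y // IsSymmML T} |
        PolyWeaklySeqContinuous T.1 ∧ polyNorm T.1 ≤ 1} ↔
    (∀ T : {T : ContinuousMultilinearMap 𝕜 (fun _ : Fin n => X) Y // IsSymmML T},
      (∃ B : ℕ → {T : ContinuousMultilinearMap 𝕜 (fun _ : Fin n => X) Y // IsSymmML T},
        (∀ k, PolyWeaklySeqContinuous (B k).1 ∧ polyNorm (B k).1 ≤ 1) ∧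
        ∀ x : X, Filter.Tendsto (fun k => (B k).1 (fun _ => x)) Filter.atTop
          (nhds (T.1 (fun _ => x)))) →
      PolyWeaklySeqContinuous T.1 ∧ polyNorm T.1 ≤ 1) := by
  let : TopologicalSpace (SymmPoly 𝕜 n X Y) :=
    TopologicalSpace.induced (fun T x => T.1 fun _ => x) Pi.topologicalSpace
  have hind : IsInducing fun (T : SymmPoly 𝕜 n X Y) (x : X) => T.1 fun _ => x := .induced _
  refine ⟨fun hC T ⟨B, hB, hBT⟩ => hC.mem_of_forall_tendsto_apply hind hB hBT, fun hseq => ?_⟩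
  exact isClosed_of_closure_subset fun T hT =>
    ⟨polyWeaklySeqContinuous_of_mem_closure hind hSCP hseq hT,
      polyNorm_le_one_of_mem_closure hind hT⟩

/-- Lemma 2.16: for `C` the closed unit ball of the weakly sequentially continuous
`n`-homogeneous polynomials (identified with symmetric multilinear maps), closedness in the
topology of pointwise convergence is equivalent to sequential closedness in that topology. -/
theorem stmt8 [CompleteSpace X] [CompleteSpace Y]
    (hSCP : SepComplProp 𝕜 X) :
    @IsClosed _ (TopologicalSpace.induced
        (fun T : {T : ContinuousMultilinearMap 𝕜 (fun _ : Fin n => X) Y // IsSymmML T} =>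
          (fun x => T.1 (fun _ => x) : X → Y))
        Pi.topologicalSpace)
      {T : {T : ContinuousMultilinearMap 𝕜 (fun _ : Fin n => X) Y // IsSymmML T} |
        PolyWeaklySeqContinuous T.1 ∧ polyNorm T.1 ≤ 1} ↔
    (∀ T : {T : ContinuousMultilinearMap 𝕜 (fun _ : Fin n => X) Y // IsSymmML T},
      (∃ B : ℕ → {T : ContinuousMultilinearMap 𝕜 (fun _ : Fin n => X) Y // IsSymmML T},
        (∀ k, PolyWeaklySeqContinuous (B k).1 ∧ polyNorm (B k).1 ≤ 1) ∧
        ∀ x : X, Filter.Tendsto (fun k => (B k).1 (fun _ => x)) Filter.atTop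
          (nhds (T.1 (fun _ => x)))) →
      PolyWeaklySeqContinuous T.1 ∧ polyNorm T.1 ≤ 1) :=
  stmt8_general hSCP
end

section
/- Let E₁,…,Eₙ be Banach lattices such that each Eⱼ is an AM-space with unit eⱼ, i.e. eⱼ ≥ 0 and for every x ∈ Eⱼ one has ‖x‖ ≤ 1 if and only if |x| ≤ eⱼ, and let F be a Dedekind complete Banach lattice. Then every positive continuous n-linear operator A : E₁ × ⋯ × Eₙ → F attains its norm; in fact ‖A(e₁,…,eₙ)‖ = ‖A‖. -/
/-!
A positive multilinear map `A` satisfies `|A x| ≤ A |x|`: split one coordinate at a time into its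
positive and negative parts. It is also monotone on the positive cone. In an AM-space with unit `e`
the closed unit ball is the order interval `[-e, e]`, so on the product of unit balls
`|A x| ≤ A |x| ≤ A e`, and the solid norm of `F` gives `‖A x‖ ≤ ‖A e‖`. Rescaling arbitrary points
into the unit ball turns this into `‖A‖ ≤ ‖A e‖`, and `e` itself lies in the unit ball.
-/

open Function

namespace MultilinearMap

variable {R ι : Type*} {M : ι → Type*} {N : Type*} [Semiring R]
  [∀ i, AddCommGroup (M i)] [∀ i, Module R (M i)] [AddCommGroup N] [Module R N]

def IsPositive [∀ i, PartialOrder (M i)] [PartialOrder N] (f : MultilinearMap R M N) : Prop :=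
  ∀ x, 0 ≤ x → 0 ≤ f x

section PartialOrder

variable [∀ i, PartialOrder (M i)] [∀ i, IsOrderedAddMonoid (M i)]
  [PartialOrder N] [IsOrderedAddMonoid N] {f : MultilinearMap R M N}

theorem IsPositive.map_update_le_map_update [DecidableEq ι] (hf : f.IsPositive) {x : ∀ i, M i}
    (hx : 0 ≤ x) (j : ι) {a b : M j} (hab : a ≤ b) : f (update x j a) ≤ f (update x j b) := by
  rw [← sub_nonneg, ← f.map_update_sub]
  refine hf _ fun i => ?_
  rcases eq_or_ne i j with rfl | hij
  · simpa using hab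
  · simpa [hij] using hx i

theorem IsPositive.map_le_map [Fintype ι] [DecidableEq ι] (hf : f.IsPositive) {u v : ∀ i, M i}
    (hu : 0 ≤ u) (huv : u ≤ v) : f u ≤ f v := by
  have key : ∀ s : Finset ι, f u ≤ f (s.piecewise v u) := by
    intro s
    induction s using Finset.induction_on with
    | empty => simp
    | insert j s hj ih =>
      have hpos : 0 ≤ s.piecewise v u := fun i =>
        s.piecewise_cases v u (fun y => 0 ≤ y) ((hu i).trans (huv i)) (hu i)
      calc f u ≤ f (s.piecewise v u) := ih
        _ = f (update (s.piecewise v u) j (u j)) := by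
          rw [← Finset.piecewise_eq_of_notMem s v u hj, update_eq_self]
        _ ≤ f (update (s.piecewise v u) j (v j)) := hf.map_update_le_map_update hpos j (huv j)
        _ = f ((insert j s).piecewise v u) := by rw [Finset.piecewise_insert]
  simpa using key Finset.univ

end PartialOrder

section Lattice

variable [∀ i, Lattice (M i)] [∀ i, IsOrderedAddMonoid (M i)]
  [Lattice N] [IsOrderedAddMonoid N] {f : MultilinearMap R M N}

theorem IsPositive.abs_map_le_map_abs [Fintype ι] [DecidableEq ι] (hf : f.IsPositive)
    (x : ∀ i, M i) : |f x| ≤ f |x| := by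
  suffices ∀ s : Finset ι, ∀ x : ∀ i, M i, (∀ i ∉ s, 0 ≤ x i) → |f x| ≤ f |x| from
    this Finset.univ x (by simp)
  intro s
  induction s using Finset.induction_on with
  | empty =>
    intro x hx
    have hx' : 0 ≤ x := fun i => hx i (Finset.notMem_empty i)
    rw [abs_of_nonneg (hf x hx'), abs_of_nonneg hx']
  | insert j s hj ih =>
    intro x hx
    have hupdate : ∀ p : M j, 0 ≤ p → ∀ i ∉ s, 0 ≤ update x j p i := by
      intro p hp i hi
      rcases eq_or_ne i j with rfl | hij
      · simpa using hp
      · simpa [hij] using hx i (by simp [hij, hi])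
    have habs_update : ∀ p : M j, 0 ≤ p → |update x j p| = update |x| j p := by
      intro p hp
      ext i
      rcases eq_or_ne i j with rfl | hij
      · simpa using abs_of_nonneg hp
      · simp [hij]
    calc |f x| = |f (update x j (x j)⁺) - f (update x j (x j)⁻)| := by
          rw [← f.map_update_sub, posPart_sub_negPart, update_eq_self]
      _ ≤ |f (update x j (x j)⁺)| + |f (update x j (x j)⁻)| := by
          simpa only [sub_eq_add_neg, abs_neg] using
            abs_add_le (f (update x j (x j)⁺)) (-f (update x j (x j)⁻))
      _ ≤ f |update x j (x j)⁺| + f |update x j (x j)⁻| :=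
          add_le_add (ih _ (hupdate _ (posPart_nonneg _))) (ih _ (hupdate _ (negPart_nonneg _)))
      _ = f (update |x| j (x j)⁺) + f (update |x| j (x j)⁻) := by
          rw [habs_update _ (posPart_nonneg _), habs_update _ (negPart_nonneg _)]
      _ = f |x| := by
          rw [← f.map_update_add, posPart_add_negPart, ← Pi.abs_apply, update_eq_self]

end Lattice

theorem IsPositive.norm_map_le_of_abs_le {N : Type*} [NormedAddCommGroup N] [Lattice N]
    [IsOrderedAddMonoid N] [HasSolidNorm N] [Module R N] [Fintype ι] [∀ i, Lattice (M i)]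
    [∀ i, IsOrderedAddMonoid (M i)] {f : MultilinearMap R M N} (hf : f.IsPositive)
    {x y : ∀ i, M i} (hxy : |x| ≤ y) : ‖f x‖ ≤ ‖f y‖ := by
  classical
  have hy : 0 ≤ y := (abs_nonneg x).trans hxy
  refine norm_le_norm_of_abs_le_abs ?_
  calc |f x| ≤ f |x| := hf.abs_map_le_map_abs x
    _ ≤ f y := hf.map_le_map (abs_nonneg x) hxy
    _ = |f y| := (abs_of_nonneg (hf y hy)).symm

end MultilinearMap

theorem ContinuousMultilinearMap.opNorm_le_of_forall_norm_le_one {ι : Type*} [Fintype ι]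
    {E : ι → Type*} [∀ i, NormedAddCommGroup (E i)] [∀ i, NormedSpace ℝ (E i)]
    {G : Type*} [NormedAddCommGroup G] [NormedSpace ℝ G] (f : ContinuousMultilinearMap ℝ E G)
    {C : ℝ} (h : ∀ m, (∀ i, ‖m i‖ ≤ 1) → ‖f m‖ ≤ C) : ‖f‖ ≤ C := by
  have hC : 0 ≤ C := (norm_nonneg _).trans (h 0 fun _ => by simp)
  refine f.opNorm_le_bound hC fun m => ?_
  by_cases hm : ∃ i, m i = 0
  · obtain ⟨i, hi⟩ := hm
    rw [f.map_coord_zero i hi, norm_zero]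
    positivity
  push Not at hm
  have hm_eq : m = fun i => ‖m i‖ • ‖m i‖⁻¹ • m i := by
    ext i
    rw [smul_inv_smul₀ (norm_ne_zero_iff.mpr (hm i))]
  calc ‖f m‖ = (∏ i, ‖m i‖) * ‖f fun i => ‖m i‖⁻¹ • m i‖ := by
        conv_lhs => rw [hm_eq, f.map_smul_univ]
        rw [norm_smul, Real.norm_of_nonneg (by positivity)]
    _ ≤ (∏ i, ‖m i‖) * C := by
        gcongr
        exact h _ fun i => (norm_smul_inv_norm (hm i)).le
    _ = C * ∏ i, ‖m i‖ := mul_comm _ _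

theorem stmt13_general {n : ℕ} {E : Fin n → Type*}
    [∀ i, NormedAddCommGroup (E i)] [∀ i, Lattice (E i)] [∀ i, IsOrderedAddMonoid (E i)]
    [∀ i, NormedSpace ℝ (E i)]
    {F : Type*} [NormedAddCommGroup F] [Lattice F] [IsOrderedAddMonoid F] [HasSolidNorm F]
    [NormedSpace ℝ F]
    -- each `Eᵢ` is an AM-space with unit `eᵢ`
    (e : ∀ i, E i)
    (ham : ∀ i, ∀ x : E i, ‖x‖ ≤ 1 ↔ |x| ≤ e i)
    -- `A` positive
    (A : ContinuousMultilinearMap ℝ E F)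
    (hA : ∀ x : ∀ i, E i, (∀ i, 0 ≤ x i) → 0 ≤ A x) :
    (∃ x : ∀ i, E i, (∀ i, ‖x i‖ ≤ 1) ∧ ‖A x‖ = ‖A‖) ∧ ‖A e‖ = ‖A‖ := by
  have hpos : A.toMultilinearMap.IsPositive := hA
  have he : 0 ≤ e := fun i => by simpa using (ham i 0).mp (by simp)
  have he_norm : ∀ i, ‖e i‖ ≤ 1 := fun i => (ham i (e i)).mpr (abs_of_nonneg (he i)).le
  have hAe : ‖A e‖ = ‖A‖ :=
    le_antisymm (A.unit_le_opNorm ((pi_norm_le_iff_of_nonneg zero_le_one).mpr he_norm)) <|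
      A.opNorm_le_of_forall_norm_le_one fun x hx =>
        hpos.norm_map_le_of_abs_le fun i => (ham i (x i)).mp (hx i)
  exact ⟨⟨e, he_norm, hAe⟩, hAe⟩

/-- Example 3.11(3): if each `Eᵢ` is an AM-space with unit `eᵢ` and `F` is a Dedekind complete
Banach lattice, then every positive continuous `n`-linear operator `A : E₁ × ⋯ × Eₙ → F`
attains its norm; in fact `‖A(e₁,…,eₙ)‖ = ‖A‖`. -/
theorem stmt13 {n : ℕ} {E : Fin n → Type*}
    [∀ i, NormedAddCommGroup (E i)] [∀ i, Lattice (E i)] [∀ i, IsOrderedAddMonoid (E i)]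
    [∀ i, HasSolidNorm (E i)] [∀ i, NormedSpace ℝ (E i)]
    [∀ i, PosSMulStrictMono ℝ (E i)] [∀ i, PosSMulReflectLT ℝ (E i)] [∀ i, CompleteSpace (E i)]
    {F : Type*} [NormedAddCommGroup F] [Lattice F] [IsOrderedAddMonoid F] [HasSolidNorm F]
    [NormedSpace ℝ F] [PosSMulStrictMono ℝ F] [PosSMulReflectLT ℝ F]
    [CompleteSpace F]
    -- each `Eᵢ` is an AM-space with unit `eᵢ`
    (e : ∀ i, E i) (he : ∀ i, 0 ≤ e i)
    (ham : ∀ i, ∀ x : E i, ‖x‖ ≤ 1 ↔ |x| ≤ e i)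
    -- `F` is Dedekind complete
    (hDed : ∀ S : Set F, S.Nonempty → BddAbove S → ∃ s, IsLUB S s)
    -- `A` positive
    (A : ContinuousMultilinearMap ℝ E F)
    (hA : ∀ x : ∀ i, E i, (∀ i, 0 ≤ x i) → 0 ≤ A x) :
    (∃ x : ∀ i, E i, (∀ i, ‖x i‖ ≤ 1) ∧ ‖A x‖ = ‖A‖) ∧ ‖A e‖ = ‖A‖ :=
  stmt13_general e ham A hA
end

section
/- There exists a continuous bilinear form A : ℓ² × ℓ² → ℝ that does not attain its norm; that is, there is no pair (x, y) with ‖x‖ ≤ 1 and ‖y‖ ≤ 1 such that |A(x, y)| = ‖A‖. -/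
open scoped ENNReal

/-! The form is `A x y = ⟪T x, y⟫` for the diagonal operator `T` with entries `n / (n + 1)`.
Then `‖A‖ = ‖T‖ = sup n / (n + 1) = 1`, but since every entry is strictly below `1`, `T` is a
strict contraction on nonzero vectors, so `|A x y| ≤ ‖T x‖ ‖y‖ < 1` on the unit balls. -/

theorem lp.norm_lt_of_le_of_exists_lt {ι : Type*} {E : ι → Type*} [∀ i, NormedAddCommGroup (E i)]
    {p : ℝ≥0∞} (hp : 0 < p.toReal) {x y : lp E p} (hle : ∀ i, ‖x i‖ ≤ ‖y i‖)
    (hlt : ∃ i, ‖x i‖ < ‖y i‖) : ‖x‖ < ‖y‖ := by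
  obtain ⟨k, hk⟩ := hlt
  have hsum : ∑' i, ‖x i‖ ^ p.toReal < ∑' i, ‖y i‖ ^ p.toReal :=
    Summable.tsum_lt_tsum (fun i => by gcongr; exact hle i)
      (Real.rpow_lt_rpow (norm_nonneg _) hk hp) ((lp.memℓp x).summable hp)
      ((lp.memℓp y).summable hp)
  rw [← lp.norm_rpow_eq_tsum hp, ← lp.norm_rpow_eq_tsum hp] at hsum
  exact (Real.rpow_lt_rpow_iff (lp.norm_nonneg' _) (lp.norm_nonneg' _) hp).mp hsum

section Diagonal

variable {ι : Type*} {p : ℝ≥0∞} (c : lp (fun _ : ι => ℝ) ∞)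

theorem lp.norm_apply_mul_le (i : ι) (a : ℝ) : ‖c i * a‖ ≤ ‖c‖ * ‖a‖ := by
  rw [norm_mul]
  exact mul_le_mul_of_nonneg_right (lp.norm_apply_le_norm ENNReal.top_ne_zero c i) (norm_nonneg _)

theorem memℓp_infty_mul (x : lp (fun _ : ι => ℝ) p) : Memℓp (fun i => c i * x i) p :=
  ((lp.memℓp x).norm.const_mul ‖c‖).mono fun i => lp.norm_apply_mul_le c i (x i)

variable [Fact (1 ≤ p)]

noncomputable def lpDiagonal : lp (fun _ : ι => ℝ) p →L[ℝ] lp (fun _ : ι => ℝ) p :=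
  LinearMap.mkContinuous
    { toFun x := ⟨fun i => c i * x i, memℓp_infty_mul c x⟩
      map_add' x y := lp.ext <| funext fun i => mul_add (c i) (x i) (y i)
      map_smul' r x := lp.ext <| funext fun i => mul_left_comm (c i) r (x i) }
    ‖c‖ fun x => by
      rw [← norm_norm c, ← lp.norm_const_smul (zero_lt_one.trans_le Fact.out).ne']
      exact lp.norm_mono (zero_lt_one.trans_le Fact.out).ne' fun i => by
        simpa [norm_mul] using lp.norm_apply_mul_le c i (x i)

@[simp]
theorem lpDiagonal_apply (x : lp (fun _ : ι => ℝ) p) (i : ι) : lpDiagonal c x i = c i * x i := rfl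

theorem norm_lpDiagonal_apply_lt (hp : p ≠ ∞) (hc : ∀ i, |c i| < ‖c‖) {x : lp (fun _ : ι => ℝ) p}
    (hx : x ≠ 0) : ‖lpDiagonal c x‖ < ‖c‖ * ‖x‖ := by
  have hp0 : p ≠ 0 := (zero_lt_one.trans_le Fact.out).ne'
  obtain ⟨k, hk⟩ : ∃ k, x k ≠ 0 := by
    by_contra! h
    exact hx (lp.ext (funext h))
  rw [← norm_norm c, ← lp.norm_const_smul hp0]
  refine lp.norm_lt_of_le_of_exists_lt (ENNReal.toReal_pos hp0 hp) (fun i => ?_) ⟨k, ?_⟩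
  · simpa [norm_mul] using lp.norm_apply_mul_le c i (x i)
  · simpa [norm_mul] using mul_lt_mul_of_pos_right (hc k) (norm_pos_iff.mpr hk)

theorem lpDiagonal_single [DecidableEq ι] (i : ι) :
    lpDiagonal c (lp.single p i 1) = lp.single p i (c i) := by
  ext j
  by_cases h : j = i <;> simp [h]

theorem norm_lpDiagonal [Nonempty ι] : ‖(lpDiagonal c : lp (fun _ : ι => ℝ) p →L[ℝ] _)‖ = ‖c‖ := by
  classical
  have hp0 : 0 < p := zero_lt_one.trans_le Fact.out
  refine le_antisymm (LinearMap.mkContinuous_norm_le _ (norm_nonneg c) _) ?_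
  refine lp.norm_le_of_forall_le (norm_nonneg _) fun i => ?_
  have := (lpDiagonal c).le_opNorm (lp.single p i 1)
  rwa [lpDiagonal_single, lp.norm_single hp0, lp.norm_single hp0, norm_one, mul_one] at this

theorem norm_lpDiagonal_apply_lt_norm [Nonempty ι] (hp : p ≠ ∞) (hc : ∀ i, |c i| < ‖c‖)
    {x : lp (fun _ : ι => ℝ) p} (hx : ‖x‖ ≤ 1) :
    ‖lpDiagonal c x‖ < ‖(lpDiagonal c : lp (fun _ : ι => ℝ) p →L[ℝ] _)‖ := by
  rw [norm_lpDiagonal]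
  rcases eq_or_ne x 0 with rfl | hx0
  · simpa using (abs_nonneg _).trans_lt (hc (Classical.arbitrary ι))
  · calc ‖lpDiagonal c x‖ < ‖c‖ * ‖x‖ := norm_lpDiagonal_apply_lt c hp hc hx0
      _ ≤ ‖c‖ := mul_le_of_le_one_right (norm_nonneg c) hx

end Diagonal

section InnerProduct

variable {E F : Type*} [NormedAddCommGroup E] [InnerProductSpace ℝ E] [SeminormedAddCommGroup F]
  [NormedSpace ℝ F]

theorem norm_innerSL_comp (T : F →L[ℝ] E) : ‖(innerSL ℝ).comp T‖ = ‖T‖ := by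
  refine le_antisymm ?_ (T.opNorm_le_bound (ContinuousLinearMap.opNorm_nonneg _) fun x => ?_)
  · simpa using (innerSL ℝ).opNorm_comp_le T |>.trans
      (mul_le_mul_of_nonneg_right (norm_innerSL_le ℝ) (norm_nonneg T))
  · rw [← innerSL_apply_norm ℝ (T x)]
    exact ((innerSL ℝ).comp T).le_opNorm x

theorem abs_innerSL_comp_apply_lt_norm {T : F →L[ℝ] E} {x : F} (hx : ‖T x‖ < ‖T‖) {y : E}
    (hy : ‖y‖ ≤ 1) : |(innerSL ℝ).comp T x y| < ‖(innerSL ℝ).comp T‖ := by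
  rw [norm_innerSL_comp]
  calc |(innerSL ℝ).comp T x y| = |inner ℝ (T x) y| := rfl
    _ ≤ ‖T x‖ * ‖y‖ := abs_real_inner_le_norm _ _
    _ ≤ ‖T x‖ := mul_le_of_le_one_right (norm_nonneg _) hy
    _ < ‖T‖ := hx

end InnerProduct

theorem abs_natCast_div_add_one_lt_one (n : ℕ) : |(n : ℝ) / (n + 1)| < 1 := by
  rw [abs_of_nonneg (by positivity), div_lt_one (by positivity)]
  exact lt_add_one _

noncomputable def natDivSucc : lp (fun _ : ℕ => ℝ) ∞ :=
  ⟨fun n => n / (n + 1), memℓp_infty ⟨1, by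
    rintro _ ⟨n, rfl⟩
    exact (abs_natCast_div_add_one_lt_one n).le⟩⟩

theorem one_le_norm_natDivSucc : 1 ≤ ‖natDivSucc‖ :=
  le_of_tendsto' (tendsto_natCast_div_add_atTop (1 : ℝ)) fun n =>
    (le_abs_self (natDivSucc n)).trans (lp.norm_apply_le_norm ENNReal.top_ne_zero natDivSucc n)

/-- There exists a continuous bilinear form on `ℓ² × ℓ²` that does not attain its norm. -/
theorem stmt16 :
    ∃ A : lp (fun _ : ℕ => ℝ) 2 →L[ℝ] lp (fun _ : ℕ => ℝ) 2 →L[ℝ] ℝ,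
      ¬ ∃ (x y : lp (fun _ : ℕ => ℝ) 2), ‖x‖ ≤ 1 ∧ ‖y‖ ≤ 1 ∧ |A x y| = ‖A‖ := by
  have hc : ∀ n, |natDivSucc n| < ‖natDivSucc‖ := fun n =>
    (abs_natCast_div_add_one_lt_one n).trans_le one_le_norm_natDivSucc
  refine ⟨(innerSL ℝ).comp (lpDiagonal natDivSucc), ?_⟩
  rintro ⟨x, y, hx, hy, hattained⟩
  exact hattained.not_lt <| abs_innerSL_comp_apply_lt_norm
    (norm_lpDiagonal_apply_lt_norm natDivSucc ENNReal.ofNat_ne_top hc hx) hy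
end

section
/- The continuous 2-homogeneous polynomial P : c₀ → ℓ² defined by P((x_k)_{k≥1}) = (x_k²/k)_{k≥1} has norm ‖P‖ = π/√6 and does not attain its norm. Equivalently: (a) for every real sequence (x_k)_{k≥1} with x_k → 0 and |x_k| ≤ 1 for all k, one has Σ_{k=1}^∞ x_k⁴/k² < π²/6; and (b) the supremum of Σ_{k=1}^∞ x_k⁴/k² over all real sequences (x_k)_{k≥1} with x_k → 0 and |x_k| ≤ 1 for all k equals π²/6 (= Σ_{k=1}^∞ 1/k²). -/
open Filter Topology

lemma basel' : HasSum (fun k : ℕ => 1 / ((k : ℝ) + 1) ^ 2) (Real.pi ^ 2 / 6) := by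
  have h := hasSum_zeta_two
  have h2 := (hasSum_nat_add_iff (f := fun n : ℕ => (1 : ℝ) / (n : ℝ) ^ 2) 1).mpr
    (by simpa using h)
  simpa using h2

lemma term_le (x : ℕ → ℝ) (hx1 : ∀ k, |x k| ≤ 1) (k : ℕ) :
    (x k) ^ 4 / ((k : ℝ) + 1) ^ 2 ≤ 1 / ((k : ℝ) + 1) ^ 2 := by
  have h := abs_le.mp (hx1 k)
  have h4 : (x k) ^ 4 ≤ 1 := by
    calc (x k) ^ 4 = |x k| ^ 4 := by rw [← abs_pow, abs_of_nonneg (by positivity)]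
    _ ≤ 1 := pow_le_one₀ (abs_nonneg _) (hx1 k)
  gcongr

lemma term_nonneg (x : ℕ → ℝ) (k : ℕ) : 0 ≤ (x k) ^ 4 / ((k : ℝ) + 1) ^ 2 := by positivity

lemma part_a (x : ℕ → ℝ) (hx : Filter.Tendsto x Filter.atTop (nhds 0))
    (hx1 : ∀ k, |x k| ≤ 1) :
    (∑' k : ℕ, (x k) ^ 4 / ((k : ℝ) + 1) ^ 2) < Real.pi ^ 2 / 6 := by
  obtain ⟨N, hN⟩ := (Metric.tendsto_atTop.mp hx 1 one_pos)
  have hNlt : |x N| < 1 := by simpa [Real.dist_eq] using hN N le_rfl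
  have hstrict : (x N) ^ 4 / ((N : ℝ) + 1) ^ 2 < 1 / ((N : ℝ) + 1) ^ 2 := by
    have h4 : (x N) ^ 4 < 1 := by
      calc (x N) ^ 4 = |x N| ^ 4 := by rw [← abs_pow, abs_of_nonneg (by positivity)]
      _ < 1 := pow_lt_one₀ (abs_nonneg _) hNlt (by norm_num)
    gcongr
  have := Summable.tsum_lt_tsum_of_nonneg (i := N) (term_nonneg x) (term_le x hx1) hstrict
    basel'.summable
  rwa [basel'.tsum_eq] at this

/-- Example 2.18(5): the 2-homogeneous polynomial `P : c₀ → ℓ²`, `P((x_k)) = (x_k²/k)`, has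
norm `π/√6` and does not attain it. Equivalently (identifying elements of the closed unit
ball of `c₀` with sequences `x` tending to `0` with `|x_k| ≤ 1`, and noting that
`‖P(x)‖² = ∑ x_k⁴/k²`):
(a) for every such sequence, `∑ x_k⁴/k² < π²/6`, and
(b) the supremum of these sums is exactly `π²/6`. -/
theorem stmt18 :
    (∀ x : ℕ → ℝ, Filter.Tendsto x Filter.atTop (nhds 0) → (∀ k, |x k| ≤ 1) →
      (∑' k : ℕ, (x k) ^ 4 / ((k : ℝ) + 1) ^ 2) < Real.pi ^ 2 / 6) ∧
    IsLUB {r : ℝ | ∃ x : ℕ → ℝ, Filter.Tendsto x Filter.atTop (nhds 0) ∧ (∀ k, |x k| ≤ 1) ∧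
      r = ∑' k : ℕ, (x k) ^ 4 / ((k : ℝ) + 1) ^ 2} (Real.pi ^ 2 / 6) := by
  refine ⟨part_a, ?_, ?_⟩
  · rintro r ⟨x, hx, hx1, rfl⟩
    exact (part_a x hx hx1).le
  · intro b hb
    -- approximate with truncated sequences
    have key : ∀ N : ℕ, (∑ k ∈ Finset.range N, 1 / ((k : ℝ) + 1) ^ 2) ≤ b := by
      intro N
      set x : ℕ → ℝ := fun k => if k < N then 1 else 0 with hxdef
      have htend : Filter.Tendsto x Filter.atTop (nhds 0) := by
        apply Tendsto.congr' _ tendsto_const_nhds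
        filter_upwards [Filter.eventually_ge_atTop N] with k hk
        simp [hxdef, Nat.not_lt.mpr hk]
      have hx1 : ∀ k, |x k| ≤ 1 := by
        intro k; by_cases h : k < N <;> simp [hxdef, h]
      have hsum : (∑' k : ℕ, (x k) ^ 4 / ((k : ℝ) + 1) ^ 2)
          = ∑ k ∈ Finset.range N, 1 / ((k : ℝ) + 1) ^ 2 := by
        rw [tsum_eq_sum (s := Finset.range N)]
        · apply Finset.sum_congr rfl
          intro k hk
          simp [hxdef, Finset.mem_range.mp hk]
        · intro k hk
          simp [hxdef, Nat.not_lt.mp (by simpa using hk)]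
      have : (∑ k ∈ Finset.range N, 1 / ((k : ℝ) + 1) ^ 2) ∈
          {r : ℝ | ∃ x : ℕ → ℝ, Filter.Tendsto x Filter.atTop (nhds 0) ∧ (∀ k, |x k| ≤ 1) ∧
            r = ∑' k : ℕ, (x k) ^ 4 / ((k : ℝ) + 1) ^ 2} :=
        ⟨x, htend, hx1, hsum.symm⟩
      exact hb this
    exact le_of_tendsto' basel'.tendsto_sum_nat key
end
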